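/- Let X and Y be proper, geodesically complete, Gromov δ-hyperbolic, Busemann metric spaces, let ε > 0, R > 1/ε, and let α: [0,R] → X⋈Y be an ε-monotone continuous (k,c)-quasigeodesic segment. Then there exists a constant M depending only on k, c and δ such that for all t₁, t₂ ∈ [0,R]: (1/k)·|t₁−t₂| − M·ε·R ≤ |h(α(t₁)) − h(α(t₂))| ≤ k·|t₁−t₂| + M·ε·R; i.e. the height function along α is a quasi-isometric embedding of [0,R] into ℝ. -/

import Mathlib

/-!
The upper bound holds because the height is `1`-Lipschitz, so the content is
`d_⋈(α t₁, α t₂) ≤ |h(α t₁) - h(α t₂)| + O(εR) + const`.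

Letting the fourth point of the four-point condition run to `a` along the ray shows that points
of a horizontal slab of width `w` satisfy the ultrametric inequality up to `w + 2δ`. Bisecting,
a quasigeodesic that stays in such a slab for parameter length `2ⁿ` moves by `O(n)` in `X`
and in `Y`, hence in `X ⋈ Y`; the quasigeodesic lower bound then caps that length by a
constant `T`. With ε-monotonicity and the intermediate value theorem this gives: parameters
whose heights differ by at most `w` are within `T + 2εR` of each other, so their images are
`O(εR)`-close. Finally, cut the height interval between `α t₁` and `α t₂` into steps of size
between `w/2 ≥ δ` and `w`, and pick points of `α` at these heights. In a hyperbolic space a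
chain of points with bounded steps and height increments at least `δ` is almost vertical: its
endpoints are `Δh + O(1)` apart. This holds in `X` and (reversing the chain) in `Y`, and
`d_⋈ ≈ d_X + d_Y - Δh`.
-/

open Set Filter MeasureTheory
open scoped ENNReal

noncomputable section

/-- `Φ` is a `(k,c)`-quasi-isometry with respect to the explicit distance
functions `dA` and `dB`. -/
def QIWith {A B : Type*} (dA : A → A → ℝ) (dB : B → B → ℝ) (k c : ℝ) (Φ : A → B) : Prop :=
  (∀ x x' : A, k⁻¹ * dA x x' - c ≤ dB (Φ x) (Φ x') ∧ dB (Φ x) (Φ x') ≤ k * dA x x' + c) ∧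
    ∀ y : B, ∃ x : A, dB (Φ x) y ≤ c

/-- `γ` is a geodesic (parametrized by arclength) on the parameter set `s`,
with respect to the distance function `d`. -/
def IsGeodesicOnD {Z : Type*} (d : Z → Z → ℝ) (γ : ℝ → Z) (s : Set ℝ) : Prop :=
  ∀ t ∈ s, ∀ u ∈ s, d (γ t) (γ u) = |t - u|

/-- `γ` is a geodesic parametrized proportionally to arclength on `s`. -/
def IsAffineGeodesicOnD {Z : Type*} (d : Z → Z → ℝ) (γ : ℝ → Z) (s : Set ℝ) : Prop :=
  ∃ c : ℝ, 0 ≤ c ∧ ∀ t ∈ s, ∀ u ∈ s, d (γ t) (γ u) = c * |t - u|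

/-- Gromov hyperbolicity (four-point condition) for the distance function `d`. -/
def GromovHyperbolicD {Z : Type*} (d : Z → Z → ℝ) (δ : ℝ) : Prop :=
  ∀ x y z w : Z, d x y + d z w ≤ max (d x z + d y w) (d x w + d y z) + 2 * δ

/-- Every two points are joined by a geodesic. -/
def GeodesicSpaceD {Z : Type*} (d : Z → Z → ℝ) : Prop :=
  ∀ x y : Z, ∃ γ : ℝ → Z, γ 0 = x ∧ γ (d x y) = y ∧ IsGeodesicOnD d γ (Icc 0 (d x y))

/-- Every geodesic segment extends to a bi-infinite geodesic line. -/
def GeodesicallyCompleteD {Z : Type*} (d : Z → Z → ℝ) : Prop :=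
  ∀ (γ : ℝ → Z) (a b : ℝ), a ≤ b → IsGeodesicOnD d γ (Icc a b) →
    ∃ γ' : ℝ → Z, IsGeodesicOnD d γ' univ ∧ EqOn γ γ' (Icc a b)

/-- Busemann convexity: the distance between any two geodesics parametrized
proportionally to arclength is a convex function. -/
def BusemannD {Z : Type*} (d : Z → Z → ℝ) : Prop :=
  ∀ (γ₁ γ₂ : ℝ → Z) (s : Set ℝ), Convex ℝ s →
    IsAffineGeodesicOnD d γ₁ s → IsAffineGeodesicOnD d γ₂ s →
    ConvexOn ℝ s fun t => d (γ₁ t) (γ₂ t)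

/-- A proper, geodesically complete, Gromov `δ`-hyperbolic, Busemann metric space
together with a distinguished vertical geodesic ray `ray` from the base point
`ray 0`, determining a boundary point `a ∈ ∂X`. -/
structure HoroSpace (X : Type*) [MetricSpace X] where
  δ : ℝ
  δ_nonneg : 0 ≤ δ
  proper : ProperSpace X
  hyperbolic : GromovHyperbolicD (fun x y : X => dist x y) δ
  geodesic : GeodesicSpaceD (fun x y : X => dist x y)
  geodComplete : GeodesicallyCompleteD (fun x y : X => dist x y)
  busemann : BusemannD (fun x y : X => dist x y)
  ray : ℝ → X
  ray_geodesic : IsGeodesicOnD (fun x y : X => dist x y) ray (Ici 0)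

/-- The height function `h(x) = −limsup_{t→∞} (d(x, V_w(t)) − t)`
(the opposite of the Busemann function of the distinguished ray). -/
def HoroSpace.height {X : Type*} [MetricSpace X] (H : HoroSpace X) (x : X) : ℝ :=
  - Filter.limsup (fun t : ℝ => dist x (H.ray t) - t) Filter.atTop

/-- The disk `D_r(p)` of radius `r` around `p` inside the horosphere through `p`. -/
def HoroSpace.disk {X : Type*} [MetricSpace X] (H : HoroSpace X) (r : ℝ) (p : X) : Set X :=
  {x : X | H.height x = H.height p ∧ dist x p ≤ r}

/-- The projection `π_z(A)`: points of the horosphere at height `z` whose upward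
vertical geodesic ray meets `A`. -/
def HoroSpace.proj {X : Type*} [MetricSpace X] (H : HoroSpace X) (z : ℝ) (A : Set X) :
    Set X :=
  {x : X | H.height x = z ∧ ∃ γ : ℝ → X,
      IsGeodesicOnD (fun a b : X => dist a b) γ (Ici z) ∧
      (∀ t ∈ Ici z, H.height (γ t) = t) ∧ γ z = x ∧ ∃ t ∈ Ici z, γ t ∈ A}

/-- The horospherical product `X ⋈ Y`: pairs whose heights add up to zero. -/
abbrev HoroProd {X Y : Type*} [MetricSpace X] [MetricSpace Y]
    (HX : HoroSpace X) (HY : HoroSpace Y) : Type _ :=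
  {p : X × Y // HX.height p.1 + HY.height p.2 = 0}

/-- `V` is a vertical geodesic of `X ⋈ Y` on the parameter set `s`: a pair of
vertical geodesics of `X` and `Y` at opposite heights, parametrized by arclength
by its height (up to orientation and an additive shift). -/
def IsVerticalOn {X Y : Type*} [MetricSpace X] [MetricSpace Y]
    (HX : HoroSpace X) (HY : HoroSpace Y)
    (V : ℝ → HoroProd HX HY) (s : Set ℝ) : Prop :=
  IsGeodesicOnD (fun a b : X => dist a b) (fun t => (V t).1.1) s ∧
  IsGeodesicOnD (fun a b : Y => dist a b) (fun t => (V t).1.2) s ∧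
  ∀ t ∈ s, ∀ u ∈ s, |HX.height ((V t).1.1) - HX.height ((V u).1.1)| = |t - u|

/-- A distance `d_⋈` on `X ⋈ Y` induced by an admissible norm: the height is
`1`-Lipschitz, `2·d_⋈ ≥ d_X + d_Y`, `d_⋈` agrees with
`d_X + d_Y − Δh` up to a bounded additive constant, and vertical geodesics of
`X ⋈ Y` are geodesics for `d_⋈`. -/
structure HoroMetric {X Y : Type*} [MetricSpace X] [MetricSpace Y]
    (HX : HoroSpace X) (HY : HoroSpace Y) where
  d : HoroProd HX HY → HoroProd HX HY → ℝ
  d_self : ∀ p, d p p = 0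
  d_comm : ∀ p q, d p q = d q p
  d_triangle : ∀ p q r, d p r ≤ d p q + d q r
  eq_of_d : ∀ p q, d p q = 0 → p = q
  height_lip : ∀ p q, |HX.height p.1.1 - HX.height q.1.1| ≤ d p q
  two_d_ge : ∀ p q, dist p.1.1 q.1.1 + dist p.1.2 q.1.2 ≤ 2 * d p q
  C : ℝ
  C_nonneg : 0 ≤ C
  approx : ∀ p q,
    |d p q - (dist p.1.1 q.1.1 + dist p.1.2 q.1.2 -
      |HX.height p.1.1 - HX.height q.1.1|)| ≤ C
  vertical_geodesic : ∀ (V : ℝ → HoroProd HX HY) (s : Set ℝ),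
    IsVerticalOn HX HY V s → ∀ t ∈ s, ∀ u ∈ s, d (V t) (V u) = |t - u|

/-- `γ` is a `(k,c)`-quasigeodesic on the parameter set `s`. -/
def IsQGOn {Z : Type*} (d : Z → Z → ℝ) (k c : ℝ) (γ : ℝ → Z) (s : Set ℝ) : Prop :=
  ∀ t ∈ s, ∀ u ∈ s,
    k⁻¹ * |t - u| - c ≤ d (γ t) (γ u) ∧ d (γ t) (γ u) ≤ k * |t - u| + c

/-- `γ` is continuous on `s` with respect to the distance function `d`. -/
def ContOnD {Z : Type*} (d : Z → Z → ℝ) (γ : ℝ → Z) (s : Set ℝ) : Prop :=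
  ∀ t ∈ s, ∀ ε > (0 : ℝ), ∃ η > (0 : ℝ), ∀ u ∈ s, |u - t| < η → d (γ t) (γ u) < ε

/-- `γ : [a,b] → Z` is `ε`-monotone with respect to the height function `hgt`:
equal heights force parameters to be `ε·(b−a)`-close. -/
def EpsMonotoneOn {Z : Type*} (hgt : Z → ℝ) (ε : ℝ) (γ : ℝ → Z) (a b : ℝ) : Prop :=
  ∀ t₁ ∈ Icc a b, ∀ t₂ ∈ Icc a b, hgt (γ t₁) = hgt (γ t₂) → |t₁ - t₂| ≤ ε * (b - a)

/-- The closed `r`-neighbourhood of `A` with respect to the distance function `d`. -/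
def nbhdD {Z : Type*} (d : Z → Z → ℝ) (r : ℝ) (A : Set Z) : Set Z :=
  {p : Z | ∃ a ∈ A, d p a ≤ r}

open Topology Asymptotics

lemma exists_add_mul_lt_two_pow (A B : ℝ) : ∃ n : ℕ, A + B * n < 2 ^ n := by
  have hlo : (fun n : ℕ => A + B * n) =o[atTop] fun n => (2 : ℝ) ^ n :=
    (isLittleO_const_left.2 <| Or.inr <| tendsto_norm_atTop_atTop.comp
        (tendsto_pow_atTop_atTop_of_one_lt one_lt_two)).add
      ((isLittleO_coe_const_pow_of_one_lt one_lt_two).const_mul_left B)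
  obtain ⟨n, hn⟩ := (hlo.def one_half_pos).exists
  refine ⟨n, (le_abs_self _).trans_lt ?_⟩
  rw [Real.norm_eq_abs, Real.norm_eq_abs, abs_of_pos (by positivity : (0 : ℝ) < 2 ^ n)] at hn
  linarith [show (0 : ℝ) < 2 ^ n by positivity]

lemma exists_nat_div_mem_Ioc {D w : ℝ} (hw : 0 < w) (hwD : w < D) :
    ∃ n : ℕ, 0 < (n : ℝ) ∧ D / n ∈ Ioc (w / 2) w := by
  have hnD : D / w ≤ ⌈D / w⌉₊ := Nat.le_ceil _
  have hn : (0 : ℝ) < ⌈D / w⌉₊ := zero_lt_one.trans (((one_lt_div hw).mpr hwD).trans_le hnD)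
  have hnw : (⌈D / w⌉₊ : ℝ) * w < D + w := by
    have := Nat.ceil_lt_add_one (div_nonneg (by linarith) hw.le : 0 ≤ D / w)
    rw [← sub_lt_iff_lt_add, lt_div_iff₀ hw] at this
    linarith
  refine ⟨⌈D / w⌉₊, hn, ?_, ?_⟩
  · rw [lt_div_iff₀ hn]
    linarith
  · rw [div_le_iff₀ hn]
    rwa [div_le_iff₀ hw, mul_comm] at hnD

lemma dist_le_add_mul_of_dist_le_max_add {Z : Type*} [PseudoMetricSpace Z] {φ : ℝ → Z}
    {a b A B : ℝ}
    (hA : ∀ s ∈ Icc a b, ∀ s' ∈ Icc a b, |s - s'| ≤ 1 → dist (φ s) (φ s') ≤ A)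
    (hB : ∀ s ∈ Icc a b, ∀ s' ∈ Icc a b, ∀ s'' ∈ Icc a b,
      dist (φ s) (φ s'') ≤ max (dist (φ s) (φ s')) (dist (φ s') (φ s'')) + B)
    (n : ℕ) : ∀ s ∈ Icc a b, ∀ s' ∈ Icc a b, |s - s'| ≤ 2 ^ n →
      dist (φ s) (φ s') ≤ A + n * B := by
  induction n with
  | zero => simpa using hA
  | succ n ih =>
    intro s hs s' hs' hss'
    have hm : (s + s') / 2 ∈ Icc a b :=
      ⟨by linarith [hs.1, hs'.1], by linarith [hs.2, hs'.2]⟩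
    have hhalf : |s - (s + s') / 2| ≤ 2 ^ n ∧ |(s + s') / 2 - s'| ≤ 2 ^ n := by
      rw [pow_succ] at hss'
      constructor <;> rw [abs_le] at hss' ⊢ <;> constructor <;> linarith [hss'.1, hss'.2]
    have h₁ := ih s hs _ hm hhalf.1
    have h₂ := ih _ hm s' hs' hhalf.2
    have := hB s hs _ hm s' hs'
    push_cast
    linarith [max_le h₁ h₂]

lemma min_le_of_levelSet_diam_le {f : ℝ → ℝ} {a b η t : ℝ} (hf : ContinuousOn f (Icc a b))
    (hlevel : ∀ s ∈ Icc a b, ∀ s' ∈ Icc a b, f s = f s' → |s - s'| ≤ η) (hη : 0 ≤ η)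
    (ht : t ∈ Icc (a + η) (b - η)) : min (f a) (f b) ≤ f t := by
  have hat : a ≤ t := by linarith [ht.1]
  have htb : t ≤ b := by linarith [ht.2]
  by_contra! hlt
  rcases le_total (f a) (f b) with hab | hba
  · obtain ⟨w, hw, hfw⟩ := intermediate_value_Icc htb (hf.mono (Icc_subset_Icc_left hat))
      ⟨(hlt.trans_le (min_le_left _ _)).le, hab⟩
    have := (abs_le.mp (hlevel w ⟨hat.trans hw.1, hw.2⟩ a ⟨le_rfl, hat.trans htb⟩ hfw)).2
    have hwt : w = t := le_antisymm (by linarith [ht.1]) hw.1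
    rw [hwt] at hfw
    linarith [min_le_left (f a) (f b)]
  · obtain ⟨w, hw, hfw⟩ := intermediate_value_Icc' hat (hf.mono (Icc_subset_Icc_right htb))
      ⟨(hlt.trans_le (min_le_right _ _)).le, hba⟩
    have := (abs_le.mp (hlevel w ⟨hw.1, hw.2.trans htb⟩ b ⟨hat.trans htb, le_rfl⟩ hfw)).1
    have hwt : w = t := le_antisymm hw.2 (by linarith [ht.2])
    rw [hwt] at hfw
    linarith [min_le_right (f a) (f b)]

lemma mem_uIcc_of_levelSet_diam_le {f : ℝ → ℝ} {a b η t : ℝ} (hf : ContinuousOn f (Icc a b))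
    (hlevel : ∀ s ∈ Icc a b, ∀ s' ∈ Icc a b, f s = f s' → |s - s'| ≤ η) (hη : 0 ≤ η)
    (ht : t ∈ Icc (a + η) (b - η)) : f t ∈ uIcc (f a) (f b) := by
  have hneg := min_le_of_levelSet_diam_le (f := fun s => -f s) hf.neg
    (fun s hs s' hs' h => hlevel s hs s' hs' (neg_inj.mp h)) hη ht
  rw [min_neg_neg, neg_le_neg_iff] at hneg
  exact ⟨min_le_of_levelSet_diam_le hf hlevel hη ht, hneg⟩

lemma abs_sub_le_of_levelSet_diam_le {f : ℝ → ℝ} {p q η w T : ℝ}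
    (hf : ContinuousOn f (Icc p q))
    (hlevel : ∀ s ∈ Icc p q, ∀ s' ∈ Icc p q, f s = f s' → |s - s'| ≤ η) (hη : 0 ≤ η)
    (hslab : ∀ a b m, Icc a b ⊆ Icc p q → (∀ t ∈ Icc a b, f t ∈ Icc m (m + w)) → b - a ≤ T)
    (hT : 0 ≤ T) {a b : ℝ} (ha : a ∈ Icc p q) (hb : b ∈ Icc p q) (hfab : |f a - f b| ≤ w) :
    |a - b| ≤ T + 2 * η := by
  wlog hab : a ≤ b generalizing a b
  · rw [abs_sub_comm]
    exact this hb ha (by rwa [abs_sub_comm]) (le_of_not_ge hab)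
  rw [abs_sub_comm, abs_of_nonneg (sub_nonneg.mpr hab)]
  by_cases hshort : b - a ≤ 2 * η
  · linarith
  have hsub : Icc a b ⊆ Icc p q := Icc_subset_Icc ha.1 hb.2
  have hmid := hslab (a + η) (b - η) (min (f a) (f b))
    ((Icc_subset_Icc (by linarith) (by linarith)).trans hsub) fun t ht => by
      have := mem_uIcc_of_levelSet_diam_le (hf.mono hsub)
        (fun s hs s' hs' => hlevel s (hsub hs) s' (hsub hs')) hη ht
      refine ⟨this.1, this.2.trans ?_⟩
      linarith [max_sub_min_eq_abs' (f a) (f b)]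
  linarith

namespace HoroSpace

variable {X : Type*} [MetricSpace X] (H : HoroSpace X)

lemma dist_ray_ray {s t : ℝ} (hs : 0 ≤ s) (ht : 0 ≤ t) : dist (H.ray s) (H.ray t) = |s - t| :=
  H.ray_geodesic s hs t ht

lemma tendsto_dist_ray_sub (x : X) :
    Tendsto (fun t => dist x (H.ray t) - t) atTop (𝓝 (-H.height x)) := by
  set g : ℝ → ℝ := fun t => dist x (H.ray (max t 0)) - max t 0
  have hanti : Antitone g := fun t u htu => by
    have hd := H.dist_ray_ray (le_max_right t 0) (le_max_right u 0)
    rw [abs_sub_comm, abs_of_nonneg (by linarith [max_le_max_right 0 htu])] at hd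
    linarith [dist_triangle x (H.ray (max t 0)) (H.ray (max u 0))]
  have hbdd : BddBelow (range g) := ⟨-dist x (H.ray 0), by
    rintro _ ⟨t, rfl⟩
    have hd := H.dist_ray_ray le_rfl (le_max_right t 0)
    rw [zero_sub, abs_neg, abs_of_nonneg (le_max_right t 0)] at hd
    linarith [dist_triangle_left (H.ray 0) (H.ray (max t 0)) x]⟩
  have hlim : Tendsto (fun t => dist x (H.ray t) - t) atTop (𝓝 (⨅ t, g t)) :=
    (tendsto_atTop_ciInf hanti hbdd).congr' <| by
      filter_upwards [eventually_ge_atTop 0] with t ht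
      simp only [g, max_eq_left ht]
  rwa [height, hlim.limsup_eq, neg_neg]

/-- The four-point condition with the boundary point `a` as the fourth point. -/
lemma dist_sub_height_le_max (p q r : X) :
    dist p r - H.height q ≤ max (dist p q - H.height r) (dist q r - H.height p) + 2 * H.δ := by
  refine le_of_tendsto_of_tendsto' (tendsto_const_nhds.add (H.tendsto_dist_ray_sub q))
    (((tendsto_const_nhds.add (H.tendsto_dist_ray_sub r)).max
      (tendsto_const_nhds.add (H.tendsto_dist_ray_sub p))).add tendsto_const_nhds) fun t => ?_
  have h4 := H.hyperbolic p r q (H.ray t)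
  simp only [dist_comm r q] at h4
  rw [← add_sub_assoc, ← add_sub_assoc, ← add_sub_assoc, max_sub_sub_right, add_comm (dist q r)]
  linarith

lemma dist_le_max_add_of_height_mem_Icc {x y z : X} {m w : ℝ} (hx : H.height x ∈ Icc m (m + w))
    (hy : H.height y ∈ Icc m (m + w)) (hz : H.height z ∈ Icc m (m + w)) :
    dist x z ≤ max (dist x y) (dist y z) + w + 2 * H.δ := by
  have hmax : max (dist x y - H.height z) (dist y z - H.height x) ≤ max (dist x y) (dist y z) - m :=
    max_le (by linarith [le_max_left (dist x y) (dist y z), hz.1])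
      (by linarith [le_max_right (dist x y) (dist y z), hx.1])
  linarith [H.dist_sub_height_le_max x y z, hy.2]

lemma dist_le_add_mul_of_height_mem_Icc {φ : ℝ → X} {a b m w A : ℝ}
    (hslab : ∀ t ∈ Icc a b, H.height (φ t) ∈ Icc m (m + w))
    (hA : ∀ s ∈ Icc a b, ∀ s' ∈ Icc a b, |s - s'| ≤ 1 → dist (φ s) (φ s') ≤ A) (n : ℕ) :
    ∀ s ∈ Icc a b, ∀ s' ∈ Icc a b, |s - s'| ≤ 2 ^ n →
      dist (φ s) (φ s') ≤ A + n * (w + 2 * H.δ) :=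
  dist_le_add_mul_of_dist_le_max_add hA (fun s hs s' hs' s'' hs'' => by
    rw [← add_assoc]
    exact H.dist_le_max_add_of_height_mem_Icc (hslab s hs) (hslab s' hs') (hslab s'' hs'')) n

lemma dist_le_of_height_eq_add_mul {x : ℕ → X} {g L : ℝ} (hg : H.δ ≤ g) (hL : 0 ≤ L) (n : ℕ)
    (hstep : ∀ j < n, dist (x j) (x (j + 1)) ≤ L)
    (hh : ∀ j ≤ n, H.height (x j) = H.height (x 0) + j * g) :
    dist (x 0) (x n) ≤ n * g + L + 2 * H.δ := by
  induction n with
  | zero => simp only [dist_self, CharP.cast_eq_zero, zero_mul, zero_add]; linarith [H.δ_nonneg]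
  | succ n ih =>
    have ih := ih (fun j hj => hstep j (by omega)) (fun j hj => hh j (by omega))
    have hn := hh n (by omega)
    have hn1 := hh (n + 1) le_rfl
    push_cast at hn1
    have hmax : max (dist (x 0) (x n) - H.height (x (n + 1)))
        (dist (x n) (x (n + 1)) - H.height (x 0)) ≤ (n + 1) * g + L - H.height (x n) :=
      max_le (by linarith) (by linarith [hstep n (by omega), H.δ_nonneg])
    push_cast
    linarith [H.dist_sub_height_le_max (x 0) (x n) (x (n + 1))]

lemma dist_le_of_height_eq_add_mul_abs {x : ℕ → X} {g L : ℝ} (hg : H.δ ≤ |g|) (hL : 0 ≤ L)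
    (n : ℕ) (hstep : ∀ j < n, dist (x j) (x (j + 1)) ≤ L)
    (hh : ∀ j ≤ n, H.height (x j) = H.height (x 0) + j * g) :
    dist (x 0) (x n) ≤ n * |g| + L + 2 * H.δ := by
  rcases le_or_gt 0 g with hg0 | hg0
  · rw [abs_of_nonneg hg0] at hg ⊢
    exact H.dist_le_of_height_eq_add_mul hg hL n hstep hh
  rw [abs_of_neg hg0] at hg ⊢
  have hrev := H.dist_le_of_height_eq_add_mul (x := fun j => x (n - j)) hg hL n
    (fun j hj => by
      rw [dist_comm, show n - j = n - (j + 1) + 1 by omega]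
      exact hstep _ (by omega))
    (fun j hj => by
      simp only [Nat.sub_zero]
      rw [hh _ (Nat.sub_le n j), hh n le_rfl, Nat.cast_sub hj]
      ring)
  rwa [Nat.sub_zero, Nat.sub_self, dist_comm] at hrev

end HoroSpace

lemma IsQGOn.mono {Z : Type*} {d : Z → Z → ℝ} {k c : ℝ} {γ : ℝ → Z} {s t : Set ℝ}
    (h : IsQGOn d k c γ t) (hst : s ⊆ t) : IsQGOn d k c γ s :=
  fun a ha b hb => h a (hst ha) b (hst hb)

lemma ContOnD.continuousOn_comp {Z : Type*} {d : Z → Z → ℝ} {γ : ℝ → Z} {s : Set ℝ}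
    {g : Z → ℝ} (hγ : ContOnD d γ s) (hg : ∀ p q, |g p - g q| ≤ d p q) :
    ContinuousOn (fun t => g (γ t)) s := fun t ht =>
  Metric.continuousWithinAt_iff.mpr fun e he => by
    obtain ⟨η, hη, hclose⟩ := hγ t ht e he
    refine ⟨η, hη, fun u hu hut => ?_⟩
    rw [Real.dist_eq, abs_sub_comm]
    exact (hg _ _).trans_lt (hclose u hu (by rwa [Real.dist_eq] at hut))

section HoroProduct

variable {X Y : Type*} [MetricSpace X] [MetricSpace Y] {HX : HoroSpace X} {HY : HoroSpace Y}

lemma HoroProd.height_snd (p : HoroProd HX HY) : HY.height p.1.2 = -HX.height p.1.1 := by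
  linarith [p.2]

namespace HoroMetric

variable (P : HoroMetric HX HY)

lemma dist_fst_le (p q : HoroProd HX HY) : dist p.1.1 q.1.1 ≤ 2 * P.d p q := by
  linarith [P.two_d_ge p q, dist_nonneg (x := p.1.2) (y := q.1.2)]

lemma dist_snd_le (p q : HoroProd HX HY) : dist p.1.2 q.1.2 ≤ 2 * P.d p q := by
  linarith [P.two_d_ge p q, dist_nonneg (x := p.1.1) (y := q.1.1)]

lemma d_le_dist_add_dist (p q : HoroProd HX HY) :
    P.d p q ≤ dist p.1.1 q.1.1 + dist p.1.2 q.1.2 - |HX.height p.1.1 - HX.height q.1.1| + P.C := by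
  linarith [(abs_le.mp (P.approx p q)).2]

lemma sub_le_two_pow_of_height_mem_Icc {k c w : ℝ} (hk : 0 < k) {n : ℕ}
    (hn : k * (4 * (k + c) + c + P.C) + k * (2 * w + 2 * HX.δ + 2 * HY.δ) * n < 2 ^ n)
    {α : ℝ → HoroProd HX HY} {a b m : ℝ} (hqg : IsQGOn P.d k c α (Icc a b))
    (hslab : ∀ t ∈ Icc a b, HX.height (α t).1.1 ∈ Icc m (m + w)) : b - a ≤ 2 ^ n := by
  by_contra! hlong
  have hA : ∀ s ∈ Icc a b, ∀ s' ∈ Icc a b, |s - s'| ≤ 1 → P.d (α s) (α s') ≤ k + c :=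
    fun s hs s' hs' h => (hqg s hs s' hs').2.trans (by nlinarith)
  have hX := HX.dist_le_add_mul_of_height_mem_Icc (A := 2 * (k + c)) hslab
    (fun s hs s' hs' h => (P.dist_fst_le _ _).trans (by linarith [hA s hs s' hs' h])) n
  have hY := HY.dist_le_add_mul_of_height_mem_Icc (φ := fun t => (α t).1.2) (m := -(m + w)) (w := w)
    (A := 2 * (k + c))
    (fun t ht => by
      rw [HoroProd.height_snd]
      exact ⟨by linarith [(hslab t ht).2], by linarith [(hslab t ht).1]⟩)
    (fun s hs s' hs' h => (P.dist_snd_le _ _).trans (by linarith [hA s hs s' hs' h])) n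
  have hpow : (0 : ℝ) < 2 ^ n := by positivity
  have ha : a ∈ Icc a b := ⟨le_rfl, by linarith⟩
  have ha' : a + 2 ^ n ∈ Icc a b := ⟨by linarith, by linarith⟩
  have hgap : |a - (a + 2 ^ n)| = 2 ^ n := by simp
  have hlow : (2 : ℝ) ^ n ≤ k * (P.d (α a) (α (a + 2 ^ n)) + c) := by
    have := (hqg a ha _ ha').1
    rw [hgap] at this
    rw [← inv_mul_le_iff₀ hk]
    linarith
  have hd := P.d_le_dist_add_dist (α a) (α (a + 2 ^ n))
  have hXd := hX a ha _ ha' hgap.le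
  have hYd := hY a ha _ ha' hgap.le
  nlinarith [abs_nonneg (HX.height (α a).1.1 - HX.height (α (a + 2 ^ n)).1.1)]

lemma d_le_of_height_eq_add_mul {p : ℕ → HoroProd HX HY} {g E : ℝ} (hgX : HX.δ ≤ g)
    (hgY : HY.δ ≤ g) (hE : 0 ≤ E) (n : ℕ) (hstep : ∀ j < n, P.d (p j) (p (j + 1)) ≤ E)
    (hh : ∀ j ≤ n, HX.height (p j).1.1 = HX.height (p 0).1.1 + j * g) :
    P.d (p 0) (p n) ≤ n * g + 4 * E + 2 * HX.δ + 2 * HY.δ + P.C := by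
  have hg : 0 ≤ g := HX.δ_nonneg.trans hgX
  have hX := HX.dist_le_of_height_eq_add_mul (x := fun j => (p j).1.1) hgX
    (by linarith : 0 ≤ 2 * E) n (fun j hj => (P.dist_fst_le _ _).trans (by linarith [hstep j hj]))
    hh
  have hY := HY.dist_le_of_height_eq_add_mul_abs (x := fun j => (p j).1.2) (g := -g)
    (by rwa [abs_neg, abs_of_nonneg hg]) (by linarith : 0 ≤ 2 * E) n
    (fun j hj => (P.dist_snd_le _ _).trans (by linarith [hstep j hj]))
    (fun j hj => by
      simp only [HoroProd.height_snd, hh j hj]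
      ring)
  rw [abs_neg, abs_of_nonneg hg] at hY
  have hmid := P.d_le_dist_add_dist (p 0) (p n)
  rw [hh n le_rfl, sub_add_cancel_left, abs_neg, abs_of_nonneg (by positivity)] at hmid
  linarith

lemma d_le_abs_height_add_of_local_bound {α : ℝ → HoroProd HX HY} {t₁ t₂ w E : ℝ} (hw : 0 < w)
    (hwX : 2 * HX.δ ≤ w) (hwY : 2 * HY.δ ≤ w)
    (hf : ContinuousOn (fun t => HX.height (α t).1.1) (uIcc t₁ t₂))
    (hloc : ∀ a ∈ uIcc t₁ t₂, ∀ b ∈ uIcc t₁ t₂,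
      |HX.height (α a).1.1 - HX.height (α b).1.1| ≤ w → P.d (α a) (α b) ≤ E) :
    P.d (α t₁) (α t₂) ≤
      |HX.height (α t₁).1.1 - HX.height (α t₂).1.1| + 6 * E + 2 * HX.δ + 2 * HY.δ + P.C := by
  set f : ℝ → ℝ := fun t => HX.height (α t).1.1
  wlog hle : f t₁ ≤ f t₂ generalizing t₁ t₂
  · rw [P.d_comm, abs_sub_comm]
    rw [uIcc_comm] at hf hloc
    exact this hloc hf (le_of_not_ge hle)
  have hloc_eq : ∀ a ∈ uIcc t₁ t₂, ∀ b ∈ uIcc t₁ t₂, f a = f b → P.d (α a) (α b) ≤ E :=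
    fun a ha b hb hab => hloc a ha b hb <| by
      change |f a - f b| ≤ w
      rw [hab, sub_self, abs_zero]
      exact hw.le
  have hE : 0 ≤ E := P.d_self (α t₁) ▸ hloc_eq t₁ left_mem_uIcc t₁ left_mem_uIcc rfl
  have hδ := HX.δ_nonneg
  have hδ' := HY.δ_nonneg
  set D := f t₂ - f t₁ with hD
  have habs : |f t₁ - f t₂| = D := by rw [abs_sub_comm, abs_of_nonneg (sub_nonneg.mpr hle)]
  rw [habs]
  by_cases hDw : D ≤ w
  · linarith [hloc t₁ left_mem_uIcc t₂ right_mem_uIcc (habs ▸ hDw), P.C_nonneg]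
  obtain ⟨n, hn, hwg, hgw⟩ := exists_nat_div_mem_Ioc hw (not_le.mp hDw)
  set g := D / n
  have hng : n * g = D := mul_div_cancel₀ D hn.ne'
  have hg : 0 ≤ g := by linarith
  have hlevels : ∀ j ≤ n, ∃ u ∈ uIcc t₁ t₂, f u = f t₁ + j * g := fun j hj =>
    intermediate_value_uIcc hf <| by
      have : (j : ℝ) * g ≤ n * g := mul_le_mul_of_nonneg_right (by exact_mod_cast hj) hg
      rw [uIcc_of_le hle]
      exact ⟨by nlinarith, by linarith⟩
  choose! u hu hfu using hlevels
  have hu₀ : f (u 0) = f t₁ := by simpa using hfu 0 (Nat.zero_le n)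
  have huₙ : f (u n) = f t₂ := by rw [hfu n le_rfl, hng, hD, add_sub_cancel]
  have hchain := P.d_le_of_height_eq_add_mul (p := fun j => α (u j)) (g := g) (by linarith)
    (by linarith) hE n
    (fun j hj => hloc _ (hu j hj.le) _ (hu (j + 1) hj) <| by
      change |f (u j) - f (u (j + 1))| ≤ w
      rw [hfu j hj.le, hfu (j + 1) hj, Nat.cast_succ, abs_sub_comm]
      rwa [show f t₁ + (j + 1) * g - (f t₁ + j * g) = g by ring, abs_of_nonneg hg])
    (fun j hj => by
      change f (u j) = f (u 0) + j * g
      rw [hfu j hj, hu₀])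
  linarith [P.d_triangle (α t₁) (α (u 0)) (α t₂), P.d_triangle (α (u 0)) (α (u n)) (α t₂),
    hloc_eq _ left_mem_uIcc _ (hu 0 (Nat.zero_le n)) hu₀.symm,
    hloc_eq _ (hu n le_rfl) _ right_mem_uIcc huₙ]

lemma d_le_abs_height_add_of_epsMonotoneOn {k c w ε R : ℝ} (hk : 0 < k) {n : ℕ}
    (hn : k * (4 * (k + c) + c + P.C) + k * (2 * w + 2 * HX.δ + 2 * HY.δ) * n < 2 ^ n)
    (hw : 0 < w) (hwX : 2 * HX.δ ≤ w) (hwY : 2 * HY.δ ≤ w) {α : ℝ → HoroProd HX HY}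
    (hcont : ContOnD P.d α (Icc 0 R)) (hqg : IsQGOn P.d k c α (Icc 0 R))
    (hmono : EpsMonotoneOn (fun p : HoroProd HX HY => HX.height p.1.1) ε α 0 R)
    {t₁ t₂ : ℝ} (ht₁ : t₁ ∈ Icc 0 R) (ht₂ : t₂ ∈ Icc 0 R) :
    P.d (α t₁) (α t₂) ≤ |HX.height (α t₁).1.1 - HX.height (α t₂).1.1| +
      6 * (k * (2 ^ n + 2 * (ε * R)) + c) + 2 * HX.δ + 2 * HY.δ + P.C := by
  have hf : ContinuousOn (fun t => HX.height (α t).1.1) (Icc 0 R) :=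
    ContOnD.continuousOn_comp (g := fun p : HoroProd HX HY => HX.height p.1.1) hcont P.height_lip
  have hlevel : ∀ s ∈ Icc 0 R, ∀ s' ∈ Icc 0 R,
      HX.height (α s).1.1 = HX.height (α s').1.1 → |s - s'| ≤ ε * R := by
    intro s hs s' hs' h
    simpa only [sub_zero] using hmono s hs s' hs' h
  have hη : 0 ≤ ε * R := (abs_nonneg _).trans (hlevel t₁ ht₁ t₁ ht₁ rfl)
  have hsub : uIcc t₁ t₂ ⊆ Icc 0 R := uIcc_subset_Icc ht₁ ht₂
  refine P.d_le_abs_height_add_of_local_bound hw hwX hwY (hf.mono hsub) fun a ha b hb hab => ?_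
  have hparam := abs_sub_le_of_levelSet_diam_le hf hlevel hη
    (fun a b m hab hslab => P.sub_le_two_pow_of_height_mem_Icc hk hn (hqg.mono hab) hslab)
    (by positivity) (hsub ha) (hsub hb) hab
  calc P.d (α a) (α b) ≤ k * |a - b| + c := (hqg a (hsub ha) b (hsub hb)).2
    _ ≤ k * (2 ^ n + 2 * (ε * R)) + c := by gcongr

end HoroMetric

end HoroProduct

/-- Along an `ε`-monotone continuous `(k,c)`-quasigeodesic
segment `α : [0,R] → X ⋈ Y` (with `R > 1/ε`), the height function is a
quasi-isometric embedding of `[0,R]` into `ℝ`: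
`(1/k)|t₁−t₂| − MεR ≤ |h(α t₁) − h(α t₂)| ≤ k|t₁−t₂| + MεR`,
with `M` depending only on `k`, `c` and `δ`. -/
theorem statement_8 {X Y : Type*} [MetricSpace X] [MetricSpace Y]
    (HX : HoroSpace X) (HY : HoroSpace Y) (P : HoroMetric HX HY)
    (k c : ℝ) (hk : 1 ≤ k) (hc : 0 ≤ c) :
    ∃ M : ℝ, 0 < M ∧ ∀ ε R : ℝ, 0 < ε → 1 / ε < R →
      ∀ α : ℝ → HoroProd HX HY,
        ContOnD P.d α (Icc 0 R) →
        IsQGOn P.d k c α (Icc 0 R) →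
        EpsMonotoneOn (fun p : HoroProd HX HY => HX.height p.1.1) ε α 0 R →
        ∀ t₁ ∈ Icc (0 : ℝ) R, ∀ t₂ ∈ Icc (0 : ℝ) R,
          k⁻¹ * |t₁ - t₂| - M * ε * R ≤
              |HX.height ((α t₁).1.1) - HX.height ((α t₂).1.1)| ∧
          |HX.height ((α t₁).1.1) - HX.height ((α t₂).1.1)| ≤
              k * |t₁ - t₂| + M * ε * R := by
  have hk₀ : 0 < k := by linarith
  have hδX := HX.δ_nonneg
  have hδY := HY.δ_nonneg
  set w := 2 * (HX.δ + HY.δ) + 1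
  obtain ⟨n, hn⟩ :=
    exists_add_mul_lt_two_pow (k * (4 * (k + c) + c + P.C)) (k * (2 * w + 2 * HX.δ + 2 * HY.δ))
  set K := 6 * (k * 2 ^ n + c) + 2 * HX.δ + 2 * HY.δ + P.C + c
  have hkn : 0 ≤ k * 2 ^ n := by positivity
  have hcK : c ≤ K := by linarith [P.C_nonneg]
  refine ⟨12 * k + K, by linarith, fun ε R hε hR α hcont hqg hmono t₁ ht₁ t₂ ht₂ => ?_⟩
  have hεR : 1 < ε * R := by rwa [div_lt_iff₀' hε] at hR
  have hd := P.d_le_abs_height_add_of_epsMonotoneOn hk₀ hn (by positivity) (by linarith)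
    (by linarith) hcont hqg hmono ht₁ ht₂
  have hKεR : K ≤ K * (ε * R) := le_mul_of_one_le_right (by linarith) hεR.le
  constructor
  · linarith [(hqg t₁ ht₁ t₂ ht₂).1]
  · linarith [(hqg t₁ ht₁ t₂ ht₂).2, P.height_lip (α t₁) (α t₂),
      mul_nonneg hk₀.le (zero_lt_one.trans hεR).le]
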